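/- arXiv:2305.13537 — 2 statements merged into one kernel-verified Lean document; each statement's English description precedes it below -/
import Mathlib

section
/- Let C and C' be groupoids internal to the category of types, with composable-pair objects C₂, C₂', morphism objects C₁, C₁', compositions m, m', and associated involutions θ = ⟨i∘π₁, m⟩, φ = ⟨m, i∘π₂⟩ and θ', φ' respectively. Suppose f₂ : C₂ → C₂' and f₁ : C₁ → C₁' satisfy θ'∘f₂ = f₂∘θ, φ'∘f₂ = f₂∘φ and m'∘f₂ = f₁∘m. Then f₂(x, y) = (f₁(x), f₁(y)) for every composable pair (x, y); f₁ preserves composition, inverses and identities; and there exists a (unique) map f₀ : C₀ → C₀' on objects, given by f₀ = d'∘f₁∘e = c'∘f₁∘e, such that (f₂, f₁, f₀) is a morphism of internal groupoids (a functor). Hence the functor F from internal groupoids to involutive-2-links is full and faithful. -/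
open CategoryTheory

universe u

/-- A pair of parallel maps is *jointly monomorphic*. -/
def JointlyMono {A B C : Type u} (f : A → B) (g : A → C) : Prop :=
  ∀ a a', f a = f a' → g a = g a' → a = a'

/-- A commutative square of types which is both a pullback and a pushout
(an exact / bicartesian / Dolittle / pulation square). -/
def Bicartesian {P X Y Z : Type u} (fst : P → X) (snd : P → Y)
    (f : X → Z) (g : Y → Z) : Prop :=
  IsPullback (C := Type u) (TypeCat.ofHom fst) (TypeCat.ofHom snd) (TypeCat.ofHom f)
    (TypeCat.ofHom g) ∧
  IsPushout (C := Type u) (TypeCat.ofHom fst) (TypeCat.ofHom snd) (TypeCat.ofHom f)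
    (TypeCat.ofHom g)

/-- An involutive-2-link `(θ, φ, m)` is *unital* (Definition 1(1)). -/
def IsUnitalLink {C₂ C₁ : Type u} (θ φ : C₂ → C₂) (m : C₂ → C₁) : Prop :=
  JointlyMono m (m ∘ θ) ∧ JointlyMono m (m ∘ φ) ∧
  ∃ e₁ e₂ : C₁ → C₂,
    m ∘ e₁ = id ∧ m ∘ e₂ = id ∧
    θ ∘ e₂ = e₂ ∧ φ ∘ e₁ = e₁ ∧
    m ∘ θ ∘ φ ∘ e₂ = m ∘ φ ∘ θ ∘ e₁ ∧
    (m ∘ θ ∘ e₁) ∘ (m ∘ φ) = (m ∘ φ ∘ e₂) ∘ (m ∘ θ) ∧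
    (m ∘ θ ∘ e₁) ∘ m = (m ∘ θ ∘ e₁) ∘ (m ∘ θ) ∧
    (m ∘ φ ∘ e₂) ∘ m = (m ∘ φ ∘ e₂) ∘ (m ∘ φ)

/-- An involutive-2-link `(θ, φ, m)` is *associative* (Definition 1(2)):
the pair `(π₁, π₂) = (m ∘ φ, m ∘ θ)` is bi-exact and the induced morphisms
`m₁, m₂` satisfy `m ∘ m₁ = m ∘ m₂`. -/
def IsAssociativeLink {C₂ C₁ : Type u} (θ φ : C₂ → C₂) (m : C₂ → C₁) : Prop :=
  ∃ (C₀ : Type u) (d c : C₁ → C₀) (C₃ : Type u) (p₁ p₂ : C₃ → C₂),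
    Bicartesian (m ∘ φ) (m ∘ θ) d c ∧
    Bicartesian p₂ p₁ (m ∘ φ) (m ∘ θ) ∧
    ∃ m₁ m₂ : C₃ → C₂,
      (m ∘ φ) ∘ m₁ = m ∘ p₁ ∧ (m ∘ θ) ∘ m₁ = (m ∘ θ) ∘ p₂ ∧
      (m ∘ φ) ∘ m₂ = (m ∘ φ) ∘ p₁ ∧ (m ∘ θ) ∘ m₂ = m ∘ p₂ ∧
      m ∘ m₁ = m ∘ m₂

/-- An internal groupoid in the category of types, presented as a diagram
`C₂ ⇉ C₁ ⇉ C₀` where `C₂` is the canonical pullback of `d` and `c`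
(composable pairs), with composition `m`, inversion `i`, identities `e`. -/
structure IntGpd : Type (u + 1) where
  C₀ : Type u
  C₁ : Type u
  d : C₁ → C₀
  c : C₁ → C₀
  e : C₀ → C₁
  i : C₁ → C₁
  m : (y x : C₁) → d y = c x → C₁
  de : ∀ a, d (e a) = a
  ce : ∀ a, c (e a) = a
  dm : ∀ y x h, d (m y x h) = d x
  cm : ∀ y x h, c (m y x h) = c y
  di : ∀ x, d (i x) = c x
  ci : ∀ x, c (i x) = d x
  ii : ∀ x, i (i x) = x
  ie : ∀ a, i (e a) = e a
  idr : ∀ x (h : d x = c (e (d x))), m x (e (d x)) h = x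
  idl : ∀ x (h : d (e (c x)) = c x), m (e (c x)) x h = x
  invr : ∀ x (h : d x = c (i x)), m x (i x) h = e (c x)
  invl : ∀ x (h : d (i x) = c x), m (i x) x h = e (d x)
  assoc : ∀ z y x (hzy : d z = c y) (hyx : d y = c x)
    (h₁ : d (m z y hzy) = c x) (h₂ : d z = c (m y x hyx)),
    m (m z y hzy) x h₁ = m z (m y x hyx) h₂

namespace IntGpd

variable (G : IntGpd.{u})

/-- The object of composable pairs. -/
def Pairs : Type u := {p : G.C₁ × G.C₁ // G.d p.1 = G.c p.2}

theorem m_congr {y y' x x' : G.C₁} (hy : y = y') (hx : x = x')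
    (h : G.d y = G.c x) (h' : G.d y' = G.c x') :
    G.m y x h = G.m y' x' h' := by subst hy; subst hx; rfl

/-- Composition as a map on composable pairs. -/
def mp : G.Pairs → G.C₁ := fun p => G.m p.1.1 p.1.2 p.2

/-- The involution `θ = ⟨i ∘ π₁, m⟩`. -/
def θp : G.Pairs → G.Pairs :=
  fun p => ⟨(G.i p.1.1, G.mp p), by rw [G.di, mp, G.cm]⟩

/-- The involution `φ = ⟨m, i ∘ π₂⟩`. -/
def φp : G.Pairs → G.Pairs :=
  fun p => ⟨(G.mp p, G.i p.1.2), by rw [G.ci, mp, G.dm]⟩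

theorem m_inv_m (y x : G.C₁) (h : G.d y = G.c x)
    (h₂ : G.d (G.i y) = G.c (G.m y x h)) :
    G.m (G.i y) (G.m y x h) h₂ = x := by
  rw [← G.assoc (G.i y) y x (by rw [G.di]) h (by rw [G.dm]; exact h) h₂]
  rw [G.m_congr (y := G.m (G.i y) y (by rw [G.di])) (y' := G.e (G.c x))
    (x := x) (x' := x) (by rw [G.invl]; exact congrArg G.e h) rfl _ (by rw [G.de])]
  exact G.idl x _

theorem m_m_inv (y x : G.C₁) (h : G.d y = G.c x)
    (h₂ : G.d (G.m y x h) = G.c (G.i x)) :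
    G.m (G.m y x h) (G.i x) h₂ = y := by
  rw [G.assoc y x (G.i x) h (by rw [G.ci]) h₂ (by rw [G.cm, ← h])]
  rw [G.m_congr (y := y) (y' := y) (x := G.m x (G.i x) (by rw [G.ci]))
    (x' := G.e (G.d y)) rfl (by rw [G.invr]; exact congrArg G.e h.symm) _ (by rw [G.ce])]
  exact G.idr y _

theorem θθ : G.θp ∘ G.θp = id := by
  funext p
  apply Subtype.ext
  apply Prod.ext
  · simp [θp, mp, G.ii]
  · simp only [θp, mp, Function.comp_apply, id_eq]
    exact G.m_inv_m p.1.1 p.1.2 p.2 _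

theorem φφ : G.φp ∘ G.φp = id := by
  funext p
  apply Subtype.ext
  apply Prod.ext
  · simp only [φp, mp, Function.comp_apply, id_eq]
    exact G.m_m_inv p.1.1 p.1.2 p.2 _
  · simp [φp, mp, G.ii]

theorem braid : G.θp ∘ G.φp ∘ G.θp = G.φp ∘ G.θp ∘ G.φp := by
  funext p
  obtain ⟨⟨y, x⟩, hp⟩ := p
  have hyx : G.d y = G.c x := hp
  -- names
  apply Subtype.ext
  apply Prod.ext
  · -- first components
    simp only [Function.comp, θp, φp, mp]
    rw [G.m_inv_m, G.m_inv_m]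
  · simp only [Function.comp, θp, φp, mp]
    rw [G.m_m_inv, G.m_m_inv]

end IntGpd

/-- An involutive-2-link in the category of types: a map `m : A → B`
together with two interlinked involutions on its domain. -/
structure I2L : Type (u + 1) where
  A : Type u
  B : Type u
  θ : A → A
  φ : A → A
  m : A → B
  θθ : θ ∘ θ = id
  φφ : φ ∘ φ = id
  braid : θ ∘ φ ∘ θ = φ ∘ θ ∘ φ

/-- Morphisms of involutive-2-links. -/
structure I2LHom (L M : I2L.{u}) : Type u where
  f : L.A → M.A
  g : L.B → M.B
  commθ : f ∘ L.θ = M.θ ∘ f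
  commφ : f ∘ L.φ = M.φ ∘ f
  commm : M.m ∘ f = g ∘ L.m

theorem I2LHom.ext' {L M : I2L.{u}} {u v : I2LHom L M}
    (h1 : u.f = v.f) (h2 : u.g = v.g) : u = v := by
  cases u; cases v; simp_all

/-- The category of involutive-2-links in the category of types. -/
instance : Category I2L.{u} where
  Hom := I2LHom
  id L := ⟨id, id, rfl, rfl, rfl⟩
  comp u v := ⟨v.f ∘ u.f, v.g ∘ u.g,
    by rw [Function.comp_assoc, u.commθ, ← Function.comp_assoc, v.commθ,
      Function.comp_assoc],
    by rw [Function.comp_assoc, u.commφ, ← Function.comp_assoc, v.commφ,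
      Function.comp_assoc],
    by rw [← Function.comp_assoc, v.commm, Function.comp_assoc, u.commm,
      ← Function.comp_assoc]⟩
  id_comp u := I2LHom.ext' rfl rfl
  comp_id u := I2LHom.ext' rfl rfl
  assoc u v w := I2LHom.ext' rfl rfl

/-- Morphisms of internal groupoids (internal functors). -/
structure IntGpdHom (G H : IntGpd.{u}) : Type u where
  f₀ : G.C₀ → H.C₀
  f₁ : G.C₁ → H.C₁
  hd : ∀ x, H.d (f₁ x) = f₀ (G.d x)
  hc : ∀ x, H.c (f₁ x) = f₀ (G.c x)
  he : ∀ a, f₁ (G.e a) = H.e (f₀ a)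
  hi : ∀ x, f₁ (G.i x) = H.i (f₁ x)
  hm : ∀ y x (h : G.d y = G.c x) (h' : H.d (f₁ y) = H.c (f₁ x)),
    f₁ (G.m y x h) = H.m (f₁ y) (f₁ x) h'

theorem IntGpdHom.ext' {G H : IntGpd.{u}} {u v : IntGpdHom G H}
    (h0 : u.f₀ = v.f₀) (h1 : u.f₁ = v.f₁) : u = v := by
  cases u; cases v; simp_all

/-- The category of internal groupoids in the category of types. -/
instance : Category IntGpd.{u} where
  Hom := IntGpdHom
  id G := ⟨id, id, fun _ => rfl, fun _ => rfl, fun _ => rfl, fun _ => rfl,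
    fun y x h h' => G.m_congr rfl rfl h h'⟩
  comp {G H K} u v :=
    ⟨v.f₀ ∘ u.f₀, v.f₁ ∘ u.f₁,
      fun x => by simp [v.hd, u.hd],
      fun x => by simp [v.hc, u.hc],
      fun a => by simp [u.he, v.he],
      fun x => by simp [u.hi, v.hi],
      fun y x h h' => by
        simp only [Function.comp_apply]
        rw [u.hm y x h (by rw [u.hd, u.hc, h]),
          v.hm _ _ (by rw [u.hd, u.hc, h]) h']⟩
  id_comp u := IntGpdHom.ext' rfl rfl
  comp_id u := IntGpdHom.ext' rfl rfl
  assoc u v w := IntGpdHom.ext' rfl rfl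

/-- The object part of the functor `F`: it forgets the underlying reflexive
graph, keeps `m : C₂ → C₁` and contracts the remaining information into the
two involutions `θ = ⟨i ∘ π₁, m⟩` and `φ = ⟨m, i ∘ π₂⟩`. -/
def FObj (G : IntGpd.{u}) : I2L.{u} where
  A := G.Pairs
  B := G.C₁
  θ := G.θp
  φ := G.φp
  m := G.mp
  θθ := G.θθ
  φφ := G.φφ
  braid := G.braid

/-- The morphism part of the functor `F`. -/
def FHom {G H : IntGpd.{u}} (u : G ⟶ H) : FObj G ⟶ FObj H where
  f p := ⟨(u.f₁ p.1.1, u.f₁ p.1.2), by rw [u.hd, u.hc, p.2]⟩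
  g := u.f₁
  commθ := by
    funext p
    apply Subtype.ext
    apply Prod.ext
    · exact u.hi p.1.1
    · exact u.hm p.1.1 p.1.2 p.2 _
  commφ := by
    funext p
    apply Subtype.ext
    apply Prod.ext
    · exact u.hm p.1.1 p.1.2 p.2 _
    · exact u.hi p.1.2
  commm := by
    funext p
    exact (u.hm p.1.1 p.1.2 p.2 _).symm

/-- Involutive-2-links which are unital and associative. -/
def GoodLink (L : I2L.{u}) : Prop :=
  IsUnitalLink L.θ L.φ L.m ∧ IsAssociativeLink L.θ L.φ L.m

/-- The conditions for `(f₀, f₁)` to underlie a morphism of internal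
groupoids (together with the preservation of composition, inversion). -/
def IsGpdMorphOn (G G' : IntGpd.{u}) (f₁ : G.C₁ → G'.C₁) (f₀ : G.C₀ → G'.C₀) : Prop :=
  (∀ x, G'.d (f₁ x) = f₀ (G.d x)) ∧
  (∀ x, G'.c (f₁ x) = f₀ (G.c x)) ∧
  (∀ a, f₁ (G.e a) = G'.e (f₀ a))
/-!
Since `m ∘ φ` and `m ∘ θ` are the two projections `C₂ → C₁`, a map `f₂` commuting with `θ`, `φ`
and with `m` (over `f₁`) acts on composable pairs as `f₁ × f₁`. Commuting with `m` then says that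
`f₁` preserves composition, and commuting with `θ` that it preserves inverses. An identity is
idempotent, so its image is idempotent, hence an identity. The object map is forced to be
`f₀ = c' ∘ f₁ ∘ e`, which gives faithfulness, and it makes `(f₁, f₀)` a functor, which gives fullness.
-/

namespace IntGpd

variable (G : IntGpd.{u})

theorem mp_θp (p : G.Pairs) : G.mp (G.θp p) = p.val.2 :=
  G.m_inv_m p.val.1 p.val.2 p.2 _

theorem mp_φp (p : G.Pairs) : G.mp (G.φp p) = p.val.1 :=
  G.m_m_inv p.val.1 p.val.2 p.2 _

theorem m_e_e (a : G.C₀) (h : G.d (G.e a) = G.c (G.e a)) : G.m (G.e a) (G.e a) h = G.e a := by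
  rw [G.m_congr (congrArg G.e (G.ce a).symm) rfl h (by rw [G.de, G.ce])]
  exact G.idl _ _

theorem eq_e_of_m_self {x : G.C₁} (h : G.d x = G.c x) (hx : G.m x x h = x) :
    x = G.e (G.c x) := by
  calc x = G.m (G.m x x h) (G.i x) (by rw [G.dm, G.ci]) := (G.m_m_inv x x h _).symm
    _ = G.m x (G.i x) (by rw [G.ci, h]) := G.m_congr hx rfl _ _
    _ = G.e (G.c x) := G.invr x _

end IntGpd

namespace IsGpdMorphOn

variable {G G' : IntGpd.{u}} {f₁ : G.C₁ → G'.C₁} {f₀ : G.C₀ → G'.C₀}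

theorem eq_c_map_e (hf : IsGpdMorphOn G G' f₁ f₀) : f₀ = fun a => G'.c (f₁ (G.e a)) :=
  funext fun a => by rw [hf.2.1, G.ce]

theorem eq_d_map_e (hf : IsGpdMorphOn G G' f₁ f₀) : f₀ = fun a => G'.d (f₁ (G.e a)) :=
  funext fun a => by rw [hf.1, G.de]

theorem map_e_d (hf : IsGpdMorphOn G G' f₁ f₀) (x : G.C₁) :
    f₁ (G.e (G.d x)) = G'.e (G'.d (f₁ x)) := by
  rw [hf.2.2, hf.1]

theorem map_e_c (hf : IsGpdMorphOn G G' f₁ f₀) (x : G.C₁) :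
    f₁ (G.e (G.c x)) = G'.e (G'.c (f₁ x)) := by
  rw [hf.2.2, hf.2.1]

theorem d_map_e_eq_c_map_e (hf : IsGpdMorphOn G G' f₁ f₀) (a : G.C₀) :
    G'.d (f₁ (G.e a)) = G'.c (f₁ (G.e a)) :=
  congrFun (hf.eq_d_map_e.symm.trans hf.eq_c_map_e) a

end IsGpdMorphOn

theorem IntGpdHom.isGpdMorphOn {G G' : IntGpd.{u}} (u : G ⟶ G') :
    IsGpdMorphOn G G' u.f₁ u.f₀ :=
  ⟨u.hd, u.hc, u.he⟩

structure IsLinkHom {G G' : IntGpd.{u}} (f₂ : G.Pairs → G'.Pairs) (f₁ : G.C₁ → G'.C₁) :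
    Prop where
  commθ : G'.θp ∘ f₂ = f₂ ∘ G.θp
  commφ : G'.φp ∘ f₂ = f₂ ∘ G.φp
  commm : G'.mp ∘ f₂ = f₁ ∘ G.mp

namespace IsLinkHom

variable {G G' : IntGpd.{u}} {f₂ : G.Pairs → G'.Pairs} {f₁ : G.C₁ → G'.C₁}

theorem f_val (hf : IsLinkHom f₂ f₁) (p : G.Pairs) : (f₂ p).val = (f₁ p.val.1, f₁ p.val.2) := by
  have h₁ : (f₂ p).val.1 = f₁ p.val.1 := by
    calc (f₂ p).val.1 = G'.mp (G'.φp (f₂ p)) := (G'.mp_φp _).symm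
      _ = G'.mp (f₂ (G.φp p)) := congrArg G'.mp (congrFun hf.commφ p)
      _ = f₁ (G.mp (G.φp p)) := congrFun hf.commm _
      _ = f₁ p.val.1 := by rw [G.mp_φp]
  have h₂ : (f₂ p).val.2 = f₁ p.val.2 := by
    calc (f₂ p).val.2 = G'.mp (G'.θp (f₂ p)) := (G'.mp_θp _).symm
      _ = G'.mp (f₂ (G.θp p)) := congrArg G'.mp (congrFun hf.commθ p)
      _ = f₁ (G.mp (G.θp p)) := congrFun hf.commm _
      _ = f₁ p.val.2 := by rw [G.mp_θp]
  exact Prod.ext h₁ h₂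

theorem d_eq_c (hf : IsLinkHom f₂ f₁) {y x : G.C₁} (h : G.d y = G.c x) :
    G'.d (f₁ y) = G'.c (f₁ x) := by
  let p : G.Pairs := ⟨(y, x), h⟩
  have hp := (f₂ p).2
  rwa [hf.f_val p] at hp

theorem map_m (hf : IsLinkHom f₂ f₁) (y x : G.C₁) (h : G.d y = G.c x)
    (h' : G'.d (f₁ y) = G'.c (f₁ x)) : f₁ (G.m y x h) = G'.m (f₁ y) (f₁ x) h' := by
  let p : G.Pairs := ⟨(y, x), h⟩
  have hp := hf.f_val p
  calc f₁ (G.m y x h) = G'.mp (f₂ p) := (congrFun hf.commm p).symm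
    _ = G'.m (f₁ y) (f₁ x) h' := G'.m_congr (congrArg Prod.fst hp) (congrArg Prod.snd hp) _ _

theorem map_i (hf : IsLinkHom f₂ f₁) (x : G.C₁) : f₁ (G.i x) = G'.i (f₁ x) := by
  let p : G.Pairs := ⟨(x, G.e (G.d x)), (G.ce _).symm⟩
  calc f₁ (G.i x) = (f₂ (G.θp p)).val.1 := (congrArg Prod.fst (hf.f_val (G.θp p))).symm
    _ = (G'.θp (f₂ p)).val.1 := congrArg (fun q : G'.Pairs => q.val.1) (congrFun hf.commθ p).symm
    _ = G'.i (f₁ x) := congrArg G'.i (congrArg Prod.fst (hf.f_val p))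

theorem map_e (hf : IsLinkHom f₂ f₁) (a : G.C₀) : f₁ (G.e a) = G'.e (G'.c (f₁ (G.e a))) := by
  have hde : G.d (G.e a) = G.c (G.e a) := by rw [G.de, G.ce]
  refine G'.eq_e_of_m_self (hf.d_eq_c hde) ?_
  rw [← hf.map_m _ _ hde, G.m_e_e]

theorem isGpdMorphOn (hf : IsLinkHom f₂ f₁) :
    IsGpdMorphOn G G' f₁ (fun a => G'.c (f₁ (G.e a))) := by
  refine ⟨fun x => hf.d_eq_c (G.ce _).symm, fun x => ?_, hf.map_e⟩
  calc G'.c (f₁ x) = G'.d (f₁ (G.e (G.c x))) := (hf.d_eq_c (G.de _)).symm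
    _ = G'.c (f₁ (G.e (G.c x))) := hf.d_eq_c (by rw [G.de, G.ce])

end IsLinkHom

theorem I2LHom.isLinkHom {G G' : IntGpd.{u}} (v : FObj G ⟶ FObj G') : IsLinkHom v.f v.g :=
  ⟨v.commθ.symm, v.commφ.symm, v.commm⟩

def I2LHom.toIntGpdHom {G G' : IntGpd.{u}} (v : FObj G ⟶ FObj G') : G ⟶ G' :=
  have hv := I2LHom.isLinkHom v
  ⟨_, v.g, hv.isGpdMorphOn.1, hv.isGpdMorphOn.2.1, hv.isGpdMorphOn.2.2, hv.map_i, hv.map_m⟩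

theorem FHom_toIntGpdHom {G G' : IntGpd.{u}} (v : FObj G ⟶ FObj G') :
    FHom (I2LHom.toIntGpdHom v) = v :=
  I2LHom.ext' (funext fun p => Subtype.ext ((I2LHom.isLinkHom v).f_val p).symm) rfl

theorem FHom_injective (G G' : IntGpd.{u}) :
    Function.Injective (fun u : G ⟶ G' => (FHom u : FObj G ⟶ FObj G')) := by
  intro u w huw
  have h₁ : u.f₁ = w.f₁ := congrArg I2LHom.g huw
  refine IntGpdHom.ext' ?_ h₁
  rw [u.isGpdMorphOn.eq_c_map_e, w.isGpdMorphOn.eq_c_map_e, h₁]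

theorem FHom_bijective (G G' : IntGpd.{u}) :
    Function.Bijective (fun u : G ⟶ G' => (FHom u : FObj G ⟶ FObj G')) :=
  ⟨FHom_injective G G', fun v => ⟨I2LHom.toIntGpdHom v, FHom_toIntGpdHom v⟩⟩

/-- The functor `F` is full and faithful: a morphism of involutive-2-links
`(f₂, f₁) : F(C) → F(C')` between the images of two internal groupoids is
componentwise (`f₂(x, y) = (f₁ x, f₁ y)`), `f₁` preserves composition,
inverses and identities, and there is a unique object-map
`f₀ = d' ∘ f₁ ∘ e = c' ∘ f₁ ∘ e` making `(f₂, f₁, f₀)` a morphism of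
internal groupoids; hence the hom-map of `F` is bijective. -/
theorem F_full_and_faithful (G G' : IntGpd.{u})
    (f₂ : G.Pairs → G'.Pairs) (f₁ : G.C₁ → G'.C₁)
    (hθ : G'.θp ∘ f₂ = f₂ ∘ G.θp)
    (hφ : G'.φp ∘ f₂ = f₂ ∘ G.φp)
    (hm : G'.mp ∘ f₂ = f₁ ∘ G.mp) :
    (∀ p : G.Pairs, (f₂ p).val = (f₁ p.val.1, f₁ p.val.2)) ∧
    (∀ y x, G.d y = G.c x → G'.d (f₁ y) = G'.c (f₁ x)) ∧
    (∀ y x (h : G.d y = G.c x) (h' : G'.d (f₁ y) = G'.c (f₁ x)),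
      f₁ (G.m y x h) = G'.m (f₁ y) (f₁ x) h') ∧
    (f₁ ∘ G.i = G'.i ∘ f₁) ∧
    (∀ x, f₁ (G.e (G.d x)) = G'.e (G'.d (f₁ x))) ∧
    (∀ x, f₁ (G.e (G.c x)) = G'.e (G'.c (f₁ x))) ∧
    (∀ a, G'.d (f₁ (G.e a)) = G'.c (f₁ (G.e a))) ∧
    (∃! f₀ : G.C₀ → G'.C₀, IsGpdMorphOn G G' f₁ f₀) ∧
    IsGpdMorphOn G G' f₁ (fun a => G'.d (f₁ (G.e a))) ∧
    IsGpdMorphOn G G' f₁ (fun a => G'.c (f₁ (G.e a))) ∧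
    (∀ (H H' : IntGpd.{u}),
      Function.Bijective (fun u : H ⟶ H' => (FHom u : FObj H ⟶ FObj H'))) := by
  have hf : IsLinkHom f₂ f₁ := ⟨hθ, hφ, hm⟩
  have hv := hf.isGpdMorphOn
  refine ⟨hf.f_val, fun y x => hf.d_eq_c, hf.map_m, funext hf.map_i, hv.map_e_d, hv.map_e_c,
    hv.d_map_e_eq_c_map_e, ⟨_, hv, fun _ hf₀ => hf₀.eq_c_map_e⟩, ?_, hv, FHom_bijective⟩
  rwa [hv.eq_d_map_e] at hv
end

section
/- Let G be a groupoid with object set C₀, morphism set C₁ and composable-pairs set C₂ = {(y, x) : dom y = cod x}, and let m(y, x) = y∘x, θ(y, x) = (y⁻¹, y∘x), φ(y, x) = (y∘x, x⁻¹). Then the involutive-2-link (θ, φ, m : C₂ → C₁) is unital, with e₁(x) = (x, id_{dom x}) and e₂(x) = (id_{cod x}, x), and associative, the bi-exactness of (m∘φ, m∘θ) = (π₁, π₂) being witnessed by d = dom, c = cod and by C₃ the set of composable triples with its two projections. -/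
open CategoryTheory

universe u

/-- The set of morphisms of a groupoid `G`, bundled with their (co)domains. -/
structure GMor (G : Type u) [Groupoid.{u} G] : Type u where
  src : G
  tgt : G
  hom : src ⟶ tgt

variable {G : Type u} [Groupoid.{u} G]

/-- Composable pairs `(y, x)` with `dom y = cod x`. -/
def GPairs (G : Type u) [Groupoid.{u} G] : Type u :=
  {p : GMor G × GMor G // p.1.src = p.2.tgt}

/-- Composable triples. -/
def GTriples (G : Type u) [Groupoid.{u} G] : Type u :=
  {t : GMor G × GMor G × GMor G // t.1.src = t.2.1.tgt ∧ t.2.1.src = t.2.2.tgt}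

/-- Composition `m(y, x) = y ∘ x` of a composable pair. -/
def mG : GPairs G → GMor G :=
  fun p => ⟨p.1.2.src, p.1.1.tgt, p.1.2.hom ≫ eqToHom p.2.symm ≫ p.1.1.hom⟩

/-- The inverse of a morphism. -/
def invG : GMor G → GMor G :=
  fun a => ⟨a.tgt, a.src, Groupoid.inv a.hom⟩

/-- The identity morphism at an object. -/
def idG (a : G) : GMor G := ⟨a, a, 𝟙 a⟩

/-- `θ(y, x) = (y⁻¹, y ∘ x)`. -/
def θG : GPairs G → GPairs G := fun p => ⟨(invG p.1.1, mG p), rfl⟩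

/-- `φ(y, x) = (y ∘ x, x⁻¹)`. -/
def φG : GPairs G → GPairs G := fun p => ⟨(mG p, invG p.1.2), rfl⟩

/-- `e₁(x) = (x, id_{dom x})`. -/
def e₁G : GMor G → GPairs G := fun x => ⟨(x, idG x.src), rfl⟩

/-- `e₂(x) = (id_{cod x}, x)`. -/
def e₂G : GMor G → GPairs G := fun x => ⟨(idG x.tgt, x), rfl⟩

/-- `d = dom`. -/
def dG : GMor G → G := fun x => x.src

/-- `c = cod`. -/
def cG : GMor G → G := fun x => x.tgt

/-- First projection of composable triples, `p₁(z, y, x) = (z, y)`. -/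
def p₁G : GTriples G → GPairs G := fun t => ⟨(t.1.1, t.1.2.1), t.2.1⟩

/-- Second projection of composable triples, `p₂(z, y, x) = (y, x)`. -/
def p₂G : GTriples G → GPairs G := fun t => ⟨(t.1.2.1, t.1.2.2), t.2.2⟩


/-!
Since `m ∘ φ` and `m ∘ θ` are the projections `(y, x) ↦ y` and `(y, x) ↦ x`, composable pairs
form the pullback of `dom` and `cod`, and composable triples the pullback of the two projections.
These pullback squares are also pushouts: `dom` and the first projection have the sections
`a ↦ id_a` and `e₁`, and through identities every element of the left corner lies over the same
point as some element of the right one. Joint monicity comes from `y = (y ∘ x) ∘ x⁻¹` and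
`x = y⁻¹ ∘ (y ∘ x)`, and `m ∘ m₁ = m ∘ m₂` is associativity of composition.
-/

open Limits

namespace CategoryTheory.Limits.Types

variable {X₁ X₂ X₃ X₄ : Type u} {t : X₁ ⟶ X₂} {r : X₂ ⟶ X₄} {l : X₁ ⟶ X₃} {b : X₃ ⟶ X₄}

lemma isPushout_of_isPullback_of_section (h : IsPullback t l r b) (s : X₄ ⟶ X₂)
    (hs : s ≫ r = 𝟙 X₄) (hrb : ∀ x₂, ∃ x₃, b x₃ = r x₂) : IsPushout t l r b := by
  have hsr (x₄ : X₄) : r (s x₄) = x₄ := types_congr_hom hs x₄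
  refine IsPushout.of_isColimit' ⟨h.w⟩ (PushoutCocone.IsColimit.mk h.w (fun c => s ≫ c.inl)
    (fun c => ?_) (fun c => ?_) (fun c m hm _ => ?_))
  all_goals have hc (x₁ : X₁) : c.inl (t x₁) = c.inr (l x₁) := types_congr_hom c.condition x₁
  · ext x₂
    -- `x₂` and `s (r x₂)` lie over a common `x₃`, so every cocone identifies them
    obtain ⟨x₃, hx₃⟩ := hrb x₂
    obtain ⟨x₁, rfl, rfl⟩ := exists_of_isPullback h x₂ x₃ hx₃.symm
    obtain ⟨x₁', hx₁', hl⟩ := exists_of_isPullback h (s (r (t x₁))) (l x₁) (by rw [hsr, hx₃])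
    show c.inl (s (r (t x₁))) = c.inl (t x₁)
    rw [← hx₁', hc, hl, ← hc]
  · ext x₃
    obtain ⟨x₁, hx₁, rfl⟩ := exists_of_isPullback h (s (b x₃)) x₃ (hsr _)
    show c.inl (s (b (l x₁))) = c.inr (l x₁)
    rw [← hx₁, hc]
  · rw [← hm, ← Category.assoc, hs, Category.id_comp]

end CategoryTheory.Limits.Types

lemma Bicartesian.of_section {P X Y Z : Type u} {fst : P → X} {snd : P → Y} {f : X → Z}
    {g : Y → Z} (comm : ∀ p, f (fst p) = g (snd p))
    (inj : ∀ p p', fst p = fst p' → snd p = snd p' → p = p')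
    (surj : ∀ x y, f x = g y → ∃ p, fst p = x ∧ snd p = y)
    {s : Z → X} (hs : Function.RightInverse s f) (hfg : ∀ x, ∃ y, g y = f x) :
    Bicartesian fst snd f g := by
  have hpb : IsPullback (TypeCat.ofHom fst) (TypeCat.ofHom snd) (TypeCat.ofHom f)
      (TypeCat.ofHom g) :=
    (Types.isPullback_iff _ _ _ _).2
      ⟨by ext p; exact comm p, fun p p' h => inj p p' h.1 h.2, surj⟩
  exact ⟨hpb, Types.isPushout_of_isPullback_of_section hpb (TypeCat.ofHom s)
    (by ext z; exact hs z) hfg⟩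

namespace GPairs

lemma ext {p q : GPairs G} (h₁ : p.1.1 = q.1.1) (h₂ : p.1.2 = q.1.2) : p = q :=
  Subtype.ext (Prod.ext h₁ h₂)

end GPairs

lemma mG_φG (p : GPairs G) : mG (φG p) = p.1.1 := by
  obtain ⟨⟨⟨ys, yt, y⟩, ⟨xs, xt, x⟩⟩, (h : ys = xt)⟩ := p
  subst h
  simp [mG, φG, invG]

lemma mG_θG (p : GPairs G) : mG (θG p) = p.1.2 := by
  obtain ⟨⟨⟨ys, yt, y⟩, ⟨xs, xt, x⟩⟩, (h : ys = xt)⟩ := p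
  subst h
  simp [mG, θG, invG]

lemma mG_e₁G (x : GMor G) : mG (e₁G x) = x := by
  simp [mG, e₁G, idG]

lemma mG_e₂G (x : GMor G) : mG (e₂G x) = x := by
  simp [mG, e₂G, idG]

lemma invG_idG (a : G) : invG (idG a) = idG a := by
  simp [invG, idG]

lemma θG_e₂G (x : GMor G) : θG (e₂G x) = e₂G x :=
  GPairs.ext (invG_idG x.tgt) (mG_e₂G x)

lemma φG_e₁G (x : GMor G) : φG (e₁G x) = e₁G x :=
  GPairs.ext (mG_e₁G x) (invG_idG x.src)

lemma jointlyMono_mG_comp_θG : JointlyMono (mG (G := G)) (mG ∘ θG) := by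
  intro p p' hm hθ
  simp only [Function.comp_apply, mG_θG] at hθ
  -- `φ (y, x) = (y ∘ x, x⁻¹)` only depends on `m (y, x)` and `x`, and recovers `y = m (φ (y, x))`
  have hφ : φG p = φG p' := GPairs.ext hm (congrArg invG hθ)
  exact GPairs.ext (by rw [← mG_φG p, hφ, mG_φG]) hθ

lemma jointlyMono_mG_comp_φG : JointlyMono (mG (G := G)) (mG ∘ φG) := by
  intro p p' hm hφ
  simp only [Function.comp_apply, mG_φG] at hφ
  have hθ : θG p = θG p' := GPairs.ext (congrArg invG hφ) hm
  exact GPairs.ext hφ (by rw [← mG_θG p, hθ, mG_θG])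

/-- `m₁(z, y, x) = (z ∘ y, x)`. -/
def m₁G (t : GTriples G) : GPairs G := ⟨(mG (p₁G t), t.1.2.2), t.2.2⟩

/-- `m₂(z, y, x) = (z, y ∘ x)`. -/
def m₂G (t : GTriples G) : GPairs G := ⟨(t.1.1, mG (p₂G t)), t.2.1⟩

lemma mG_m₁G_eq_mG_m₂G (t : GTriples G) : mG (m₁G t) = mG (m₂G t) := by
  obtain ⟨⟨⟨zs, zt, z⟩, ⟨ys, yt, y⟩, ⟨xs, xt, x⟩⟩, ⟨(h₁ : zs = yt), (h₂ : ys = xt)⟩⟩ := t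
  subst h₁ h₂
  dsimp only [mG, m₁G, m₂G, p₁G, p₂G]
  simp

lemma bicartesian_dG_cG : Bicartesian (mG (G := G) ∘ φG) (mG ∘ θG) dG cG := by
  refine Bicartesian.of_section (s := idG) (fun p => ?_) (fun p p' h₁ h₂ => ?_)
    (fun y x h => ⟨⟨(y, x), h⟩, mG_φG _, mG_θG _⟩) (fun _ => rfl)
    (fun x => ⟨idG x.src, rfl⟩)
  · simp only [Function.comp_apply, mG_φG, mG_θG]
    exact p.2
  · simp only [Function.comp_apply, mG_φG, mG_θG] at h₁ h₂
    exact GPairs.ext h₁ h₂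

lemma bicartesian_p₂G_p₁G :
    Bicartesian (p₂G (G := G)) p₁G (mG ∘ φG) (mG ∘ θG) := by
  refine Bicartesian.of_section (s := e₁G) (fun t => ?_) (fun t t' h₁ h₂ => ?_)
    (fun q q' h => ?_) (fun x => mG_φG (e₁G x))
    (fun q => ⟨e₂G q.1.1, (mG_θG _).trans (mG_φG q).symm⟩)
  · simp only [Function.comp_apply, mG_φG, mG_θG]
    rfl
  · have hyx := congrArg (fun q : GPairs G => q.1) h₁
    have hz := congrArg (fun q : GPairs G => q.1.1) h₂
    exact Subtype.ext (Prod.ext hz hyx)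
  · simp only [Function.comp_apply, mG_φG, mG_θG] at h
    exact ⟨⟨(q'.1.1, q.1.1, q.1.2), q'.2.trans (congrArg GMor.tgt h.symm), q.2⟩,
      GPairs.ext rfl rfl, GPairs.ext rfl h⟩

/-- For any groupoid `G`, the involutive-2-link `(θ, φ, m)` with
`θ(y, x) = (y⁻¹, y ∘ x)` and `φ(y, x) = (y ∘ x, x⁻¹)` is unital, with
`e₁(x) = (x, id_{dom x})` and `e₂(x) = (id_{cod x}, x)`, and associative,
the bi-exactness of `(m ∘ φ, m ∘ θ)` being witnessed by `d = dom`,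
`c = cod` and by the object of composable triples with its two
projections. -/
theorem groupoid_link_unital_and_associative (G : Type u) [Groupoid.{u} G] :
    -- unital, witnessed by e₁, e₂
    JointlyMono (mG (G := G)) (mG ∘ θG) ∧
    JointlyMono (mG (G := G)) (mG ∘ φG) ∧
    mG (G := G) ∘ e₁G = id ∧
    mG (G := G) ∘ e₂G = id ∧
    θG (G := G) ∘ e₂G = e₂G ∧
    φG (G := G) ∘ e₁G = e₁G ∧
    mG (G := G) ∘ θG ∘ φG ∘ e₂G = mG ∘ φG ∘ θG ∘ e₁G ∧
    (mG (G := G) ∘ θG ∘ e₁G) ∘ (mG ∘ φG) = (mG ∘ φG ∘ e₂G) ∘ (mG ∘ θG) ∧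
    (mG (G := G) ∘ θG ∘ e₁G) ∘ mG = (mG ∘ θG ∘ e₁G) ∘ (mG ∘ θG) ∧
    (mG (G := G) ∘ φG ∘ e₂G) ∘ mG = (mG ∘ φG ∘ e₂G) ∘ (mG ∘ φG) ∧
    -- associative, with the indicated bi-exactness witnesses
    Bicartesian (mG (G := G) ∘ φG) (mG ∘ θG) dG cG ∧
    Bicartesian (p₂G (G := G)) p₁G (mG ∘ φG) (mG ∘ θG) ∧
    (∃ m₁ m₂ : GTriples G → GPairs G,
      (mG ∘ φG) ∘ m₁ = mG ∘ p₁G ∧ (mG ∘ θG) ∘ m₁ = (mG ∘ θG) ∘ p₂G ∧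
      (mG ∘ φG) ∘ m₂ = (mG ∘ φG) ∘ p₁G ∧ (mG ∘ θG) ∘ m₂ = mG ∘ p₂G ∧
      mG ∘ m₁ = mG ∘ m₂) := by
  refine ⟨jointlyMono_mG_comp_θG, jointlyMono_mG_comp_φG, funext mG_e₁G, funext mG_e₂G,
    funext θG_e₂G, funext φG_e₁G, ?_, ?_, ?_, ?_, bicartesian_dG_cG, bicartesian_p₂G_p₁G,
    m₁G, m₂G, ?_⟩
  all_goals simp only [funext_iff, Function.comp_apply, mG_φG, mG_θG]
  · exact fun _ => rfl
  · exact fun p => congrArg idG p.2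
  · exact fun _ => rfl
  · exact fun _ => rfl
  · exact ⟨fun _ => rfl, fun _ => rfl, fun _ => rfl, fun _ => rfl, mG_m₁G_eq_mG_m₂G⟩
end
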